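/- arXiv:1902.01706 — 5 statements merged into one kernel-verified Lean document; each statement's English description precedes it below -/
import Mathlib

section
/- Let A be a binary Lie algebra over a field F of characteristic not 2, V a vector space over F, and θ: A × A → V a skew-symmetric bilinear map. Define on A ⊕ V the product [x+x', y+y'] := [x,y] + θ(x,y) for x,y ∈ A and x',y' ∈ V. Then A ⊕ V with this product is a binary Lie algebra if and only if θ([[x,y],x],y) = θ([[x,y],y],x) for all x,y ∈ A. -/
/-- The central extension product on `A × V` determined by the bracket `br` on `A`
and the skew-symmetric bilinear map `θ : A × A → V`. -/
def extBr {F A V : Type*} [Field F] [AddCommGroup A] [Module F A]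
    [AddCommGroup V] [Module F V]
    (br : A →ₗ[F] A →ₗ[F] A) (θ : A →ₗ[F] A →ₗ[F] V) :
    A × V → A × V → A × V :=
  fun p q => (br p.1 q.1, θ p.1 q.1)

/-- For a binary Lie algebra `A` and a skew-symmetric bilinear map `θ : A × A → V`,
the algebra `A ⊕ V` with product `[x+x', y+y'] = [x,y] + θ(x,y)` is a binary Lie
algebra if and only if `θ([[x,y],x],y) = θ([[x,y],y],x)` for all `x,y ∈ A`. -/
theorem stmt_5 {F A V : Type*} [Field F] [AddCommGroup A] [Module F A]
    [AddCommGroup V] [Module F V]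
    (h2 : (2 : F) ≠ 0)
    (br : A →ₗ[F] A →ₗ[F] A)
    (hanti : ∀ x y : A, br x y = - br y x)
    (hBL : ∀ x y : A, br (br (br x y) x) y = br (br (br x y) y) x)
    (θ : A →ₗ[F] A →ₗ[F] V)
    (hskew : ∀ x y : A, θ x y = - θ y x) :
    ((∀ p q : A × V, extBr br θ p q = - extBr br θ q p) ∧
     (∀ p q : A × V,
        extBr br θ (extBr br θ (extBr br θ p q) p) q =
          extBr br θ (extBr br θ (extBr br θ p q) q) p)) ↔
    (∀ x y : A, θ (br (br x y) x) y = θ (br (br x y) y) x) := by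
  constructor
  · rintro ⟨-, hb⟩ x y
    have h := congrArg Prod.snd (hb (x, 0) (y, 0))
    simpa [extBr] using h
  · intro hc
    refine ⟨fun p q => ?_, fun p q => ?_⟩
    · simp [extBr, Prod.ext_iff, hanti p.1 q.1, hskew p.1 q.1]
    · simp [extBr, Prod.ext_iff, hBL p.1 q.1, hc p.1 q.1]
end

section
/- Every anticommutative CD-algebra over a field of characteristic not 2 is a binary Lie algebra: the CD-identity with a = y and b = x yields [[[x,y],y],x] = [[[x,y],x],y] for all x,y. -/
/-- Every anticommutative CD-algebra over a field of characteristic not 2 is a binary Lie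
algebra: the CD-identity with `a = y` and `b = x` yields `[[[x,y],y],x] = [[[x,y],x],y]`. -/
theorem stmt_9 {F A : Type*} [Field F] [AddCommGroup A] [Module F A]
    (h2 : (2 : F) ≠ 0)
    (br : A →ₗ[F] A →ₗ[F] A)
    (hanti : ∀ x y : A, br x y = - br y x)
    (hCD : ∀ x y a b : A,
      br (br (br x y) a) b - br (br (br x y) b) a =
        br (br (br x a) b) y - br (br (br x b) a) y +
          br x (br (br y a) b) - br x (br (br y b) a)) :
    ∀ x y : A, br (br (br x y) y) x = br (br (br x y) x) y := by
  have hz : ∀ x : A, br x x = 0 := by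
    intro x
    have h := hanti x x
    have h2' : (2 : F) • br x x = 0 := by
      rw [two_smul]
      nth_rewrite 1 [h]
      abel
    exact (smul_eq_zero.mp h2').resolve_left h2 |>.symm ▸ rfl
  intro x y
  have h := hCD x y y x
  rw [hz y, hz x] at h
  simp only [map_zero, LinearMap.zero_apply] at h
  have hswap : br x (br (br y x) y) = br (br (br x y) y) x := by
    rw [hanti y x, map_neg, LinearMap.neg_apply, map_neg, hanti x (br (br x y) y)]
    abel
  rw [hswap] at h
  -- h : L - M = M - 0 + 0 - L
  have key : (2 : F) • (br (br (br x y) y) x - br (br (br x y) x) y) = 0 := by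
    rw [two_smul]
    nth_rewrite 1 [h]
    abel
  have := (smul_eq_zero.mp key).resolve_left h2
  exact sub_eq_zero.mp this
end

section
/- The 6-dimensional algebra B_{6,3} with nonzero products [e₁,e₂]=e₃, [e₃,e₄]=e₅, [e₁,e₃]=e₆, [e₄,e₅]=e₆ is not a Malcev algebra: there exist x,y,z with J(x,y,[x,z]) ≠ [J(x,y,z),x]. -/
/-!
Take `x = e₄`, `y = e₁`, `z = e₂`. Then `[x, z] = 0`, so the left side `J(x, y, 0)` vanishes,
while `J(e₄, e₁, e₂) = [[e₁, e₂], e₄] = e₅` and `[e₅, e₄] = -e₆ ≠ 0`.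
-/

/-- The bracket of the 6-dimensional algebra `B_{6,3}`: nonzero products
`[e₁,e₂]=e₃`, `[e₃,e₄]=e₅`, `[e₁,e₃]=e₆`, `[e₄,e₅]=e₆` (0-indexed coordinates). -/
def b63 {F : Type*} [Field F] (x y : Fin 6 → F) : Fin 6 → F :=
  ![0, 0, x 0 * y 1 - x 1 * y 0, 0, x 2 * y 3 - x 3 * y 2,
    (x 0 * y 2 - x 2 * y 0) + (x 3 * y 4 - x 4 * y 3)]

/-- The Jacobian of `B_{6,3}`. -/
def jac63 {F : Type*} [Field F] (x y z : Fin 6 → F) : Fin 6 → F :=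
  b63 (b63 x y) z + b63 (b63 y z) x + b63 (b63 z x) y

theorem b63_zero_left {F : Type*} [Field F] (x : Fin 6 → F) : b63 0 x = 0 := by
  ext i; fin_cases i <;> simp [b63]

theorem b63_zero_right {F : Type*} [Field F] (x : Fin 6 → F) : b63 x 0 = 0 := by
  ext i; fin_cases i <;> simp [b63]

theorem jac63_zero_right {F : Type*} [Field F] (x y : Fin 6 → F) : jac63 x y 0 = 0 := by
  simp only [jac63, b63_zero_left, b63_zero_right, add_zero]

theorem stmt_11_general {F : Type*} [Field F] :
    ∃ x y z : Fin 6 → F, jac63 x y (b63 x z) ≠ b63 (jac63 x y z) x := by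
  refine ⟨![0, 0, 0, 1, 0, 0], ![1, 0, 0, 0, 0, 0], ![0, 1, 0, 0, 0, 0], ?_⟩
  have h_bracket_xz : b63 ![0, 0, 0, 1, 0, 0] ![0, 1, 0, 0, 0, 0] = (0 : Fin 6 → F) := by
    ext i; fin_cases i <;> simp [b63]
  have h_jac : jac63 ![0, 0, 0, 1, 0, 0] ![1, 0, 0, 0, 0, 0] ![0, 1, 0, 0, 0, 0] =
      (![0, 0, 0, 0, 1, 0] : Fin 6 → F) := by
    ext i; fin_cases i <;> simp [jac63, b63]
  rw [h_bracket_xz, jac63_zero_right, h_jac]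
  intro h
  simpa [b63] using congrFun h 5

/-- `B_{6,3}` is not a Malcev algebra: there exist `x,y,z` with
`J(x,y,[x,z]) ≠ [J(x,y,z),x]`. -/
theorem stmt_11 {F : Type*} [Field F] (h2 : (2 : F) ≠ 0) :
    ∃ x y z : Fin 6 → F, jac63 x y (b63 x z) ≠ b63 (jac63 x y z) x :=
  stmt_11_general
end

section
/- The 5-dimensional algebra M_{5,1} with nonzero products [e₁,e₂]=e₃, [e₃,e₄]=e₅ is a Malcev algebra (it satisfies J(x,y,[x,z]) = [J(x,y,z),x] for all x,y,z) but is not a Lie algebra (J(e₁,e₂,e₄) ≠ 0). -/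
/-- The bracket of the 5-dimensional algebra `M_{5,1}`: nonzero products
`[e₁,e₂]=e₃`, `[e₃,e₄]=e₅` (0-indexed coordinates). -/
def m51 {F : Type*} [Field F] (x y : Fin 5 → F) : Fin 5 → F :=
  ![0, 0, x 0 * y 1 - x 1 * y 0, 0, x 2 * y 3 - x 3 * y 2]

/-- The Jacobian of `M_{5,1}`. -/
def jac51 {F : Type*} [Field F] (x y z : Fin 5 → F) : Fin 5 → F :=
  m51 (m51 x y) z + m51 (m51 y z) x + m51 (m51 z x) y

/-- `M_{5,1}` is a Malcev algebra but not a Lie algebra. -/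
theorem stmt_15 {F : Type*} [Field F] (h2 : (2 : F) ≠ 0) :
    (∀ x y z : Fin 5 → F, jac51 x y (m51 x z) = m51 (jac51 x y z) x) ∧
    jac51 (Pi.single 0 1) (Pi.single 1 1) (Pi.single 3 (1 : F)) ≠ 0 := by
  constructor
  · intro x y z
    funext i
    fin_cases i <;>
      simp [jac51, m51, Pi.add_apply, Matrix.cons_val_zero, Matrix.cons_val_one] <;> ring
  · intro h
    have h4 := congrFun h 4
    simp [jac51, m51, Pi.single_apply] at h4
end

section
/- Let A be a binary Lie algebra over F of characteristic not 2 and θ: A × A → F a 2-cocycle (skew-symmetric bilinear with θ([[x,y],x],y) = θ([[x,y],y],x)). Define ψ_θ(x,y,z) := θ([x,y],z) + θ([y,z],x) + θ([z,x],y). Then ψ_θ([x,y],z,t) + ψ_θ([x,t],z,y) + ψ_θ([z,y],x,t) + ψ_θ([z,t],x,y) = 0 for all x,y,z,t ∈ A. -/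
/-- Let `A` be a binary Lie algebra over `F` of characteristic not 2 and
`θ : A × A → F` a 2-cocycle. Define `ψ_θ(x,y,z) = θ([x,y],z) + θ([y,z],x) + θ([z,x],y)`.
Then `ψ_θ([x,y],z,t) + ψ_θ([x,t],z,y) + ψ_θ([z,y],x,t) + ψ_θ([z,t],x,y) = 0`. -/
theorem stmt_16 {F A : Type*} [Field F] [AddCommGroup A] [Module F A]
    (h2 : (2 : F) ≠ 0)
    (br : A →ₗ[F] A →ₗ[F] A)
    (hanti : ∀ x y : A, br x y = - br y x)
    (hBL : ∀ x y : A, br (br (br x y) x) y = br (br (br x y) y) x)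
    (θ : A →ₗ[F] A →ₗ[F] F)
    (hskew : ∀ x y : A, θ x y = - θ y x)
    (hcoc : ∀ x y : A, θ (br (br x y) x) y = θ (br (br x y) y) x)
    (ψ : A → A → A → F)
    (hψ : ∀ x y z : A, ψ x y z = θ (br x y) z + θ (br y z) x + θ (br z x) y) :
    ∀ x y z t : A,
      ψ (br x y) z t + ψ (br x t) z y + ψ (br z y) x t + ψ (br z t) x y = 0 := by
  -- first polarization of the cocycle identity (in the first variable)
  have L1 : ∀ x z y : A,
      θ (br (br x y) z) y + θ (br (br z y) x) y
        - θ (br (br x y) y) z - θ (br (br z y) y) x = 0 := by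
    intro x z y
    have h := hcoc (x + z) y
    simp only [map_add, LinearMap.add_apply] at h
    linear_combination h - hcoc x y - hcoc z y
  -- second polarization (in the second variable)
  have L2 : ∀ x y z t : A,
      θ (br (br x y) z) t + θ (br (br x t) z) y + θ (br (br z y) x) t + θ (br (br z t) x) y
        - θ (br (br x y) t) z - θ (br (br x t) y) z
        - θ (br (br z y) t) x - θ (br (br z t) y) x = 0 := by
    intro x y z t
    have h := L1 x z (y + t)
    simp only [map_add, LinearMap.add_apply] at h
    linear_combination h - L1 x z y - L1 x z t
  have hneg : ∀ a b c : A, θ (br a b) c = - θ (br b a) c := by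
    intro a b c
    rw [hanti a b]
    simp
  intro x y z t
  simp only [hψ]
  linear_combination L2 x y z t + hskew (br z t) (br x y) + hskew (br z y) (br x t)
    + hneg t (br x y) z + hneg y (br x t) z + hneg t (br z y) x + hneg y (br z t) x
end
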